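/- In the group G_n, conjugation by g₁^k sends the normal form g₁^{k₁} g₂^{k₂} ⋯ g_{2n+1}^{k_{2n+1}} to g₁^{k + k₁ - k(-1)^{k₂+k₄+⋯+k_{2n}}} g₂^{k₂} ⋯ g_{2n+1}^{k_{2n+1}}. -/

import Mathlib

/-- The defining relators of the group `Gₙ`: generators are indexed by `{1, …, 2n+1}`;
for even `j`, `g_j g₁ g_j⁻¹ = g₁⁻¹` and `g_{j+1} g_j g_{j+1}⁻¹ = g₁ g_j`;
all other pairs of generators commute. -/
def relsG (n : ℕ) : Set (FreeGroup {i : ℕ // 1 ≤ i ∧ i ≤ 2*n+1}) :=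
  { w | (∃ j : {i : ℕ // 1 ≤ i ∧ i ≤ 2*n+1}, j.1 % 2 = 0 ∧
          w = FreeGroup.of j * FreeGroup.of ⟨1, by omega⟩ * (FreeGroup.of j)⁻¹ *
              FreeGroup.of ⟨1, by omega⟩) ∨
        (∃ j j1 : {i : ℕ // 1 ≤ i ∧ i ≤ 2*n+1}, j.1 % 2 = 0 ∧ j1.1 = j.1 + 1 ∧
          w = FreeGroup.of j1 * FreeGroup.of j * (FreeGroup.of j1)⁻¹ *
              (FreeGroup.of ⟨1, by omega⟩ * FreeGroup.of j)⁻¹) ∨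
        (∃ a b : {i : ℕ // 1 ≤ i ∧ i ≤ 2*n+1},
          ¬ ((a.1 = 1 ∧ b.1 % 2 = 0) ∨ (b.1 = 1 ∧ a.1 % 2 = 0) ∨
             (b.1 % 2 = 0 ∧ a.1 = b.1 + 1) ∨ (a.1 % 2 = 0 ∧ b.1 = a.1 + 1)) ∧
          w = FreeGroup.of a * FreeGroup.of b * (FreeGroup.of a)⁻¹ * (FreeGroup.of b)⁻¹) }

/-- The polycyclic group `Gₙ` of Hirsch length `2n+1`. -/
abbrev Gn (n : ℕ) := PresentedGroup (relsG n)

/-- The generator `g_i` of `Gₙ` (1-based index, `1 ≤ i ≤ 2n+1`). -/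
def gg (n : ℕ) (i : ℕ) : Gn n :=
  if h : 1 ≤ i ∧ i ≤ 2*n+1 then PresentedGroup.of ⟨i, h⟩ else 1

/-- `(-1)^m` for an integer `m`: `1` if `m` is even, `-1` if `m` is odd. -/
def eps (m : ℤ) : ℤ := if m % 2 = 0 then 1 else -1

/-!
The generator `g₁` commutes with every odd-indexed generator and is inverted by every
even-indexed one, so `g_j ^ k * g₁ ^ t = g₁ ^ (±t) * g_j ^ k` with sign `(-1)^k` for even `j`
and `+1` for odd `j`. Pushing `g₁ ^ (-k)` leftwards through `g₂^{k₂} ⋯ g_{2n+1}^{k_{2n+1}}`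
therefore turns it into `g₁ ^ (-k (-1)^{k₂ + k₄ + ⋯ + k_{2n}})`, which merges with the leading
`g₁ ^ (k + k₁)`.
-/

lemma eps_add (a b : ℤ) : eps (a + b) = eps a * eps b := by
  unfold eps; split_ifs <;> omega

lemma eps_add_one (a : ℤ) : eps (a + 1) = -eps a := by
  unfold eps; split_ifs <;> omega

lemma eps_sub_one (a : ℤ) : eps (a - 1) = -eps a := by
  unfold eps; split_ifs <;> omega

section Group

variable {G : Type*} [Group G] {a x : G}

theorem zpow_mul_zpow_of_mul_mul_inv_eq_inv (h : x * a * x⁻¹ = a⁻¹) (k t : ℤ) :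
    x ^ k * a ^ t = a ^ (t * eps k) * x ^ k := by
  have hx : ∀ s : ℤ, x * a ^ s = a ^ (-s) * x := fun s => by
    rw [← mul_inv_eq_iff_eq_mul, ← conj_zpow, h, inv_zpow']
  induction k using Int.induction_on generalizing t with
  | zero => simp [eps]
  | succ k ih =>
    rw [zpow_add_one, mul_assoc, hx, ← mul_assoc, ih, mul_assoc, ← zpow_add_one, eps_add_one,
      neg_mul, mul_neg]
  | pred k ih =>
    have hx' : x⁻¹ * a ^ t = a ^ (-t) * x⁻¹ := by
      rw [inv_mul_eq_iff_eq_mul, ← mul_assoc, hx, neg_neg, mul_inv_cancel_right]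
    rw [zpow_sub_one, mul_assoc, hx', ← mul_assoc, ih, mul_assoc, ← zpow_sub_one, eps_sub_one,
      neg_mul, mul_neg]

theorem prod_map_range_mul_zpow (f : ℕ → G) (c : ℕ → ℤ) {m : ℕ}
    (hf : ∀ i < m, ∀ t : ℤ, f i * a ^ t = a ^ (t * eps (c i)) * f i) (t : ℤ) :
    ((List.range m).map f).prod * a ^ t =
      a ^ (t * eps (∑ i ∈ Finset.range m, c i)) * ((List.range m).map f).prod := by
  induction m generalizing t with
  | zero => simp [eps]
  | succ m ih =>
    rw [List.range_succ, List.map_append, List.prod_append, List.map_singleton,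
      List.prod_singleton, mul_assoc, hf m m.lt_succ_self, ← mul_assoc,
      ih (fun i hi => hf i (hi.trans m.lt_succ_self)), mul_assoc, Finset.sum_range_succ,
      eps_add, mul_assoc, mul_comm (eps _)]

end Group

lemma sum_range_two_mul_ite_even (f : ℕ → ℤ) (n : ℕ) :
    ∑ i ∈ Finset.range (2 * n), (if i % 2 = 0 then f i else 0) =
      ∑ i ∈ Finset.range n, f (2 * i) := by
  induction n with
  | zero => simp
  | succ n ih =>
    rw [show 2 * (n + 1) = 2 * n + 1 + 1 by ring, Finset.sum_range_succ, Finset.sum_range_succ,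
      ih, Finset.sum_range_succ, if_pos (by omega), if_neg (by omega), add_zero]

namespace Gn

variable {n : ℕ}

lemma gg_of_mem {i : ℕ} (h : 1 ≤ i ∧ i ≤ 2 * n + 1) : gg n i = PresentedGroup.of ⟨i, h⟩ :=
  dif_pos h

lemma gg_mul_gg_one_mul_inv_of_even {j : ℕ} (hj : j % 2 = 0) (h1 : 1 ≤ j) (h2 : j ≤ 2 * n + 1) :
    gg n j * gg n 1 * (gg n j)⁻¹ = (gg n 1)⁻¹ := by
  have hrel := PresentedGroup.one_of_mem (rels := relsG n) (Or.inl ⟨⟨j, h1, h2⟩, hj, rfl⟩)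
  simp only [map_mul, map_inv] at hrel
  rw [gg_of_mem ⟨h1, h2⟩, gg_of_mem (by omega)]
  exact mul_eq_one_iff_eq_inv.mp hrel

lemma commute_gg_one_of_odd {i : ℕ} (hi : i % 2 = 1) : Commute (gg n 1) (gg n i) := by
  by_cases h : 1 ≤ i ∧ i ≤ 2 * n + 1
  · rcases eq_or_ne i 1 with rfl | hne
    · exact Commute.refl _
    have hrel := PresentedGroup.one_of_mem (rels := relsG n)
      (Or.inr (Or.inr ⟨⟨1, by omega⟩, ⟨i, h⟩, by dsimp only; omega, rfl⟩))
    simp only [map_mul, map_inv] at hrel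
    rw [gg_of_mem (by omega), gg_of_mem h]
    exact commutatorElement_eq_one_iff_mul_comm.mp hrel
  · rw [show gg n i = 1 from dif_neg h]
    exact Commute.one_right _

lemma gg_zpow_mul_gg_one_zpow {j : ℕ} (h1 : 1 ≤ j) (h2 : j ≤ 2 * n + 1) (k t : ℤ) :
    gg n j ^ k * gg n 1 ^ t = gg n 1 ^ (t * eps (if j % 2 = 0 then k else 0)) * gg n j ^ k := by
  split_ifs with hj
  · exact zpow_mul_zpow_of_mul_mul_inv_eq_inv (gg_mul_gg_one_mul_inv_of_even hj h1 h2) k t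
  · rw [show eps 0 = 1 from rfl, mul_one]
    exact ((commute_gg_one_of_odd (by omega)).zpow_zpow t k).symm.eq

end Gn

theorem stmt10 (n : ℕ) (kk : ℤ) (ks : ℕ → ℤ) :
    gg n 1 ^ kk * ((List.range (2*n+1)).map (fun i => gg n (i+1) ^ ks (i+1))).prod *
      gg n 1 ^ (-kk) =
    gg n 1 ^ (kk + ks 1 - kk * eps (∑ i ∈ Finset.range n, ks (2*i+2))) *
      ((List.range (2*n)).map (fun i => gg n (i+2) ^ ks (i+2))).prod := by
  have hpush := prod_map_range_mul_zpow (m := 2 * n) (a := gg n 1)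
    (fun i => gg n (i + 2) ^ ks (i + 2)) (fun i => if (i + 2) % 2 = 0 then ks (i + 2) else 0)
    (fun i hi t => Gn.gg_zpow_mul_gg_one_zpow (by omega) (by omega) (ks (i + 2)) t) (-kk)
  simp only [Nat.add_mod_right, sum_range_two_mul_ite_even (fun i => ks (i + 2))] at hpush
  rw [List.range_succ_eq_map, List.map_cons, List.map_map, List.prod_cons, ← mul_assoc,
    ← zpow_add, mul_assoc, Function.comp_def, hpush, ← mul_assoc, ← zpow_add]
  ring_nf
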